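/- Let G be a finite simple graph all of whose IR(G)-sets are independent. If the IR-graph H of G is connected and has order at least three, then H contains a triangle or an induced 4-cycle C_4. -/

import Mathlib

open SimpleGraph

section IRDefs

variable {V : Type*}

/-- `w` is a `D`-private neighbour of `v`: `w` is dominated by `v` but by no other
vertex of `D`. -/
def IsPrivateNbr (G : SimpleGraph V) (D : Set V) (v w : V) : Prop :=
  (w = v ∨ G.Adj v w) ∧ ∀ u ∈ D, u ≠ v → ¬(w = u ∨ G.Adj u w)

/-- The set `PN(v, D)` of `D`-private neighbours of `v`. -/
def PN (G : SimpleGraph V) (v : V) (D : Set V) : Set V := {w | IsPrivateNbr G D v w}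

/-- The set `EPN(v, D) = PN(v, D) − D` of external `D`-private neighbours of `v`. -/
def EPN (G : SimpleGraph V) (v : V) (D : Set V) : Set V := PN G v D \ D

/-- A set `D` is irredundant if every vertex of `D` has a `D`-private neighbour. -/
def Irredundant (G : SimpleGraph V) (D : Set V) : Prop := ∀ v ∈ D, (PN G v D).Nonempty

/-- The upper irredundance number `IR(G)`. -/
noncomputable def IRnum (G : SimpleGraph V) : ℕ :=
  sSup {n | ∃ D : Set V, Irredundant G D ∧ D.ncard = n}

/-- An `IR(G)`-set: an irredundant set of maximum cardinality `IR(G)`. -/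
def IsIRSet (G : SimpleGraph V) (D : Set V) : Prop :=
  Irredundant G D ∧ D.ncard = IRnum G

/-- The `IR`-graph of `G`: vertices are the `IR(G)`-sets, and `D` is adjacent to `D'`
iff `D' = (D − {u}) ∪ {v}` for some `u ∈ D` and `v ∈ D' − {u}` with `uv ∈ E(G)`. -/
def IRGraph (G : SimpleGraph V) [Fintype V] :
    SimpleGraph {D : Set V // IsIRSet G D} where
  Adj D D' := ∃ a b, a ∈ D.1 ∧ b ∈ D'.1 ∧ b ≠ a ∧ G.Adj a b ∧ D'.1 = (D.1 \ {a}) ∪ {b}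
  symm := ⟨by
    rintro ⟨D, hD⟩ ⟨D', hD'⟩ ⟨a, b, ha, hb, hba, hadj, heq⟩
    dsimp only at ha hb heq ⊢
    have hbD : b ∉ D := by
      intro hbD
      have h1 : D' = D \ {a} := by
        rw [heq]
        ext x
        simp only [Set.mem_union, Set.mem_diff, Set.mem_singleton_iff]
        constructor
        · rintro (h | rfl)
          · exact h
          · exact ⟨hbD, hba⟩
        · exact Or.inl
      have h2 : D'.ncard = D.ncard - 1 := by
        rw [h1, Set.ncard_diff_singleton_of_mem ha]
      have h3 : D.ncard = D'.ncard := by rw [hD.2, hD'.2]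
      have h4 : 0 < D.ncard := (Set.ncard_pos (Set.toFinite D)).2 ⟨a, ha⟩
      omega
    refine ⟨b, a, hb, ha, fun h => hba h.symm, hadj.symm, ?_⟩
    rw [heq]
    ext x
    simp only [Set.mem_union, Set.mem_diff, Set.mem_singleton_iff]
    constructor
    · intro hx
      by_cases hxa : x = a
      · exact Or.inr hxa
      · have hxb : x ≠ b := fun h => hbD (h ▸ hx)
        exact Or.inl ⟨Or.inl ⟨hx, hxa⟩, hxb⟩
    · rintro (⟨(⟨hx, _⟩ | rfl), hxb⟩ | rfl)
      · exact hx
      · exact absurd rfl hxb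
      · exact ha⟩
  loopless := ⟨by
    rintro ⟨D, hD⟩ ⟨a, b, ha, hb, hba, hadj, heq⟩
    dsimp only at ha hb heq
    have h2 : a ∈ (D \ {a}) ∪ {b} := heq ▸ ha
    rcases h2 with h | h
    · exact h.2 rfl
    · exact hba h.symm⟩

end IRDefs

/-!
Let `B` be an `IR`-set with two distinct neighbours `A = B - u + v` and `C = B - x + y` in the
`IR`-graph; all three are independent. If `u = x`, then `v` and `y` must be adjacent, for
otherwise `B - u + v + y` would be an independent, hence irredundant, set of size `IR(G) + 1`;
so `A` and `C` are adjacent and `A, B, C` is a triangle. If `u ≠ x`, performing both exchanges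
gives `D = B - u - x + v + y`, which is irredundant (`u` and `x` are private neighbours of `v` and
`y`, every other vertex is its own), hence an `IR`-set, and `B, A, D, C` is an induced `C₄`:
opposite corners differ in two vertices.
-/

namespace SimpleGraph

variable {W : Type*} {H : SimpleGraph W}

lemma Preconnected.exists_adj_adj_ne (hH : H.Preconnected) {a b c : W}
    (hab : a ≠ b) (hac : a ≠ c) (hbc : b ≠ c) : ∃ x y z, H.Adj x y ∧ H.Adj x z ∧ y ≠ z := by
  by_contra! hno
  have hreach : ∀ {x y}, H.Reachable x y → x = y ∨ H.Adj x y := by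
    rintro x y ⟨w⟩
    induction w with
    | nil => exact Or.inl rfl
    | cons hadj _ ih =>
      rcases ih with rfl | hadj'
      · exact Or.inr hadj
      · exact Or.inl (hno _ _ _ hadj.symm hadj')
  exact hbc (hno a b c ((hreach (hH a b)).resolve_left hab) ((hreach (hH a c)).resolve_left hac))

lemma nonempty_cycleGraph_four_embedding {a b c d : W} (hab : H.Adj a b) (hbc : H.Adj b c)
    (hcd : H.Adj c d) (hda : H.Adj d a) (hac : a ≠ c) (hbd : b ≠ d)
    (hnac : ¬H.Adj a c) (hnbd : ¬H.Adj b d) : Nonempty (cycleGraph 4 ↪g H) := by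
  refine ⟨⟨⟨![a, b, c, d], ?_⟩, ?_⟩⟩
  · intro i j hij
    fin_cases i <;> fin_cases j <;> simp_all [eq_comm, hab.ne, hbc.ne, hcd.ne]
  · intro i j
    change H.Adj (![a, b, c, d] i) (![a, b, c, d] j) ↔ (cycleGraph 4).Adj i j
    fin_cases i <;> fin_cases j <;>
      simp [cycleGraph_adj, hab, hbc, hcd, hda, hab.symm, hbc.symm, hcd.symm, hda.symm, hnac,
        hnbd, H.adj_comm c a, H.adj_comm d b] <;> decide

variable {V : Type*} {G : SimpleGraph V}

lemma IsIndepSet.not_eq_or_adj {s : Set V} (hs : G.IsIndepSet s) {a b : V} (ha : a ∈ s)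
    (hb : b ∈ s) (hab : a ≠ b) : ¬(b = a ∨ G.Adj a b) :=
  fun h => h.elim (fun h => hab h.symm) (hs ha hb hab)

lemma IsIndepSet.not_adj {s : Set V} (hs : G.IsIndepSet s) {a b : V} (ha : a ∈ s)
    (hb : b ∈ s) : ¬G.Adj a b :=
  fun h => hs ha hb h.ne h

lemma IsIndepSet.irredundant {D : Set V} (hD : G.IsIndepSet D) : Irredundant G D :=
  fun v hv => ⟨v, Or.inl rfl, fun _ ht htv => hD.not_eq_or_adj ht hv htv⟩

end SimpleGraph

section IRSets

variable {V : Type*} {G : SimpleGraph V}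

lemma ncard_le_IRnum [Finite V] {D : Set V} (hD : Irredundant G D) : D.ncard ≤ IRnum G :=
  le_csSup ⟨Nat.card V, by rintro n ⟨D, -, rfl⟩; exact Set.ncard_le_card D⟩ ⟨D, hD, rfl⟩

lemma IsIRSet.not_isIndepSet_insert [Finite V] {D : Set V} (hD : IsIRSet G D) {v : V}
    (hv : v ∉ D) : ¬G.IsIndepSet (insert v D) := by
  intro hI
  have := ncard_le_IRnum hI.irredundant
  rw [Set.ncard_insert_of_notMem hv, hD.2] at this
  omega

lemma irredundant_insert_sdiff_of_exchanges {B : Set V} {u v x y : V}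
    (hB : G.IsIndepSet B) (hA : G.IsIndepSet (insert v (B \ {u})))
    (hC : G.IsIndepSet (insert y (B \ {x}))) (hu : u ∈ B) (hx : x ∈ B) (hux : u ≠ x)
    (hv : v ∉ B) (huv : G.Adj u v) (hxy : G.Adj x y) :
    Irredundant G (insert v (insert y (B \ {x}) \ {u})) := by
  have hxA : x ∈ insert v (B \ {u}) := Set.mem_insert_of_mem _ ⟨hx, hux.symm⟩
  have huC : u ∈ insert y (B \ {x}) := Set.mem_insert_of_mem _ ⟨hu, hux⟩
  rintro w (rfl | ⟨rfl | ⟨hwB, hwx⟩, hwu⟩)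
  · refine ⟨u, Or.inr huv.symm, fun t ht htw => ?_⟩
    obtain ⟨htC, htu⟩ := ht.resolve_left htw
    exact hC.not_eq_or_adj htC huC htu
  · refine ⟨x, Or.inr hxy.symm, fun t ht htw => ?_⟩
    rcases ht with rfl | ⟨htC, -⟩
    · exact hA.not_eq_or_adj (Set.mem_insert _ _) hxA (fun h => hv (h ▸ hx))
    · obtain ⟨htB, htx⟩ := htC.resolve_left htw
      exact hB.not_eq_or_adj htB hx htx
  · refine ⟨w, Or.inl rfl, fun t ht htw => ?_⟩
    rcases ht with rfl | ⟨htC, -⟩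
    · exact hA.not_eq_or_adj (Set.mem_insert _ _) (Set.mem_insert_of_mem _ ⟨hwB, hwu⟩) htw
    · exact hC.not_eq_or_adj htC (Set.mem_insert_of_mem _ ⟨hwB, hwx⟩) htw

namespace IRGraph

variable [Fintype V] {A B C : {D : Set V // IsIRSet G D}}

lemma adj_iff : (IRGraph G).Adj B A ↔
    ∃ u ∈ B.1, ∃ v ∉ B.1, G.Adj u v ∧ A.1 = insert v (B.1 \ {u}) := by
  constructor
  · rintro ⟨u, v, hu, -, -, huv, hA⟩
    rw [Set.union_singleton] at hA
    refine ⟨u, hu, v, fun hv => ?_, huv, hA⟩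
    have : A.1.ncard < B.1.ncard := by
      rw [hA, Set.insert_eq_of_mem (Set.mem_sdiff_singleton.2 ⟨hv, huv.ne'⟩)]
      exact Set.ncard_sdiff_singleton_lt_of_mem hu
    exact this.ne (A.2.2.trans B.2.2.symm)
  · rintro ⟨u, hu, v, -, huv, hA⟩
    exact ⟨u, v, hu, by rw [hA]; exact Set.mem_insert v _, huv.ne', huv,
      hA.trans Set.union_singleton.symm⟩

lemma subsingleton_sdiff_of_adj (h : (IRGraph G).Adj B A) : (A.1 \ B.1).Subsingleton := by
  obtain ⟨u, -, v, -, -, hA⟩ := adj_iff.1 h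
  rintro p ⟨hp, hpB⟩ q ⟨hq, hqB⟩
  rw [hA] at hp hq
  exact (hp.resolve_right fun h => hpB h.1).trans (hq.resolve_right fun h => hqB h.1).symm

variable (hI : ∀ D, IsIRSet G D → G.IsIndepSet D)
include hI

lemma adj_of_exchanges_same {u v y : V} (hv : v ∉ B.1) (hy : y ∉ B.1) (hvy : v ≠ y)
    (hA : A.1 = insert v (B.1 \ {u})) (hC : C.1 = insert y (B.1 \ {u})) :
    (IRGraph G).Adj A C := by
  have hvA : v ∈ A.1 := hA ▸ Set.mem_insert v _
  have hvC : v ∉ C.1 := by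
    rw [hC]
    rintro (h | h)
    exacts [hvy h, hv h.1]
  by_cases hadj : G.Adj v y
  · refine adj_iff.2 ⟨v, hvA, y, ?_, hadj, ?_⟩
    · rw [hA]
      rintro (h | h)
      exacts [hvy h.symm, hy h.1]
    · rw [hC, hA, Set.insert_sdiff_self_of_notMem fun h => hv h.1]
  · refine absurd (Set.Pairwise.insert (hI C.1 C.2) fun b hb _ => ?_) (C.2.not_isIndepSet_insert hvC)
    have hnadj : ¬G.Adj v b := by
      rw [hC] at hb
      rcases hb with rfl | hbB
      · exact hadj
      · exact (hI A.1 A.2).not_adj hvA (hA ▸ Set.mem_insert_of_mem v hbB)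
    exact ⟨hnadj, fun h => hnadj h.symm⟩

lemma nonempty_cycleGraph_four_embedding_of_exchanges {u v x y : V} (hu : u ∈ B.1)
    (hv : v ∉ B.1) (huv : G.Adj u v) (hA : A.1 = insert v (B.1 \ {u})) (hx : x ∈ B.1)
    (hy : y ∉ B.1) (hxy : G.Adj x y) (hC : C.1 = insert y (B.1 \ {x})) (hux : u ≠ x) :
    Nonempty (cycleGraph 4 ↪g IRGraph G) := by
  have hAI : G.IsIndepSet (insert v (B.1 \ {u})) := hA ▸ hI A.1 A.2
  have hCI : G.IsIndepSet (insert y (B.1 \ {x})) := hC ▸ hI C.1 C.2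
  have hxA : x ∈ A.1 := hA ▸ Set.mem_insert_of_mem _ ⟨hx, hux.symm⟩
  have huC : u ∈ C.1 := hC ▸ Set.mem_insert_of_mem _ ⟨hu, hux⟩
  have hyC : y ∈ C.1 := hC ▸ Set.mem_insert y _
  have hvy : v ≠ y := by
    rintro rfl
    exact hAI.not_adj (hA ▸ hxA) (Set.mem_insert _ _) hxy
  have hyu : y ≠ u := fun h => hy (h ▸ hu)
  have hvx : v ≠ x := fun h => hv (h ▸ hx)
  have hvC : v ∉ C.1 := by
    rw [hC]
    rintro (h | h)
    exacts [hvy h, hv h.1]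
  have hyA : y ∉ A.1 := by
    rw [hA]
    rintro (h | h)
    exacts [hvy h.symm, hy h.1]
  have huA : u ∉ A.1 := by
    rw [hA]
    rintro (h | h)
    exacts [hv (h ▸ hu), h.2 rfl]
  let D : {D : Set V // IsIRSet G D} := ⟨insert v (C.1 \ {u}),
    hC ▸ irredundant_insert_sdiff_of_exchanges (hI B.1 B.2) hAI hCI hu hx hux hv huv hxy,
    (Set.ncard_exchange hvC huC).trans C.2.2⟩
  have hvD : v ∈ D.1 := Set.mem_insert v _
  have hyD : y ∈ D.1 := Set.mem_insert_of_mem v ⟨hyC, hyu⟩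
  have hBA : (IRGraph G).Adj B A := adj_iff.2 ⟨u, hu, v, hv, huv, hA⟩
  have hBC : (IRGraph G).Adj B C := adj_iff.2 ⟨x, hx, y, hy, hxy, hC⟩
  have hCD : (IRGraph G).Adj C D := adj_iff.2 ⟨u, huC, v, hvC, huv, rfl⟩
  have hAD : (IRGraph G).Adj A D := by
    refine adj_iff.2 ⟨x, hxA, y, hyA, hxy, ?_⟩
    change insert v (C.1 \ {u}) = insert y (A.1 \ {x})
    rw [hA, hC, Set.insert_sdiff_of_notMem _ (Set.notMem_singleton_iff.2 hyu),
      Set.insert_sdiff_of_notMem _ (Set.notMem_singleton_iff.2 hvx), Set.sdiff_sdiff_comm,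
      Set.insert_comm]
  have hnAC : ¬(IRGraph G).Adj A C :=
    fun h => hyu (subsingleton_sdiff_of_adj h ⟨hyC, hyA⟩ ⟨huC, huA⟩)
  have hnBD : ¬(IRGraph G).Adj B D :=
    fun h => hvy (subsingleton_sdiff_of_adj h ⟨hvD, hv⟩ ⟨hyD, hy⟩)
  exact nonempty_cycleGraph_four_embedding hBA hAD hCD.symm hBC.symm
    (fun h => hv (h ▸ hvD)) (fun h => huA (h ▸ huC)) hnBD hnAC

theorem exists_triangle_or_cycleGraph_four_embedding (hBA : (IRGraph G).Adj B A)
    (hBC : (IRGraph G).Adj B C) (hAC : A ≠ C) :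
    (∃ A B C, (IRGraph G).Adj A B ∧ (IRGraph G).Adj B C ∧ (IRGraph G).Adj A C) ∨
      Nonempty (cycleGraph 4 ↪g IRGraph G) := by
  obtain ⟨u, hu, v, hv, huv, hA⟩ := adj_iff.1 hBA
  obtain ⟨x, hx, y, hy, hxy, hC⟩ := adj_iff.1 hBC
  by_cases hux : u = x
  · subst hux
    have hvy : v ≠ y := fun h => hAC (Subtype.ext (by rw [hA, hC, h]))
    exact .inl ⟨A, B, C, hBA.symm, hBC, adj_of_exchanges_same hI hv hy hvy hA hC⟩
  · exact .inr (nonempty_cycleGraph_four_embedding_of_exchanges hI hu hv huv hA hx hy hxy hC hux)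

end IRGraph

end IRSets

/-- If all `IR(G)`-sets are independent and the `IR`-graph of `G` is connected
of order at least three, then the `IR`-graph contains a triangle or an induced
4-cycle. -/
theorem statement10 {V : Type*} [Fintype V] (G : SimpleGraph V)
    (hindep : ∀ D : Set V, IsIRSet G D → ∀ p ∈ D, ∀ q ∈ D, ¬ G.Adj p q)
    (hconn : (IRGraph G).Connected)
    (horder : 3 ≤ {D : Set V | IsIRSet G D}.ncard) :
    (∃ A B C, (IRGraph G).Adj A B ∧ (IRGraph G).Adj B C ∧ (IRGraph G).Adj A C) ∨
      Nonempty (SimpleGraph.cycleGraph 4 ↪g IRGraph G) := by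
  have hI : ∀ D, IsIRSet G D → G.IsIndepSet D := fun D hD p hp q hq _ => hindep D hD p hp q hq
  obtain ⟨X, Y, Z, hX, hY, hZ, hXY, hXZ, hYZ⟩ := (Set.two_lt_ncard_iff (Set.toFinite _)).1 horder
  obtain ⟨B, A, C, hBA, hBC, hAC⟩ := hconn.preconnected.exists_adj_adj_ne
    (a := ⟨X, hX⟩) (b := ⟨Y, hY⟩) (c := ⟨Z, hZ⟩) (by simpa) (by simpa) (by simpa)
  exact IRGraph.exists_triangle_or_cycleGraph_four_embedding hI hBA hBC hAC
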